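/- arXiv:1302.0871 — 6 statements merged into one kernel-verified Lean document; each statement's English description precedes it below -/
import Mathlib

section
/- Let m0 ≥ 1, m ≥ 2 and s ≥ 8 be integers, and set Σ = s·m + m0 and Q = s·m² + m0². If m0 ≥ Σ/√(s+2), then 4·m0² ≥ Q + Σ + 3m² + 6m0. -/
/-!
Since `s ≥ 2`, the hypothesis `m0 √(s+2) ≥ s m + m0` already forces `m0 ≥ m √(s+2)`, i.e.
`m0² ≥ (s+2) m²`. The claim then follows from the decomposition
`4 m0² - (Q + Σ + 3m² + 6m0) = 2 (m0² - (s+2) m²) + (m0 - 7/2)² + ((s+1) m² - s m - 49/4)`,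
whose last term is at least `2 (s+2) - 49/4 > 0` for `m ≥ 2`, `s ≥ 5`.
-/

lemma mul_sqrt_le_of_div_sqrt_le {x m s : ℝ} (hm : 0 ≤ m) (hs : 2 ≤ s)
    (h : (s * m + x) / √(s + 2) ≤ x) : m * √(s + 2) ≤ x := by
  set t := √(s + 2)
  have ht2 : 2 ≤ t := Real.le_sqrt_of_sq_le (by linarith)
  have ht_sq : t ^ 2 = s + 2 := Real.sq_sqrt (by linarith)
  have hxt : s * m + x ≤ x * t := (div_le_iff₀ (by linarith)).mp h
  -- `t (t - 1) ≤ t² - 2 = s` because `t ≥ 2`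
  have hmul : m * t * (t - 1) ≤ x * (t - 1) := by nlinarith
  exact le_of_mul_le_mul_right hmul (by linarith)

lemma sq_mul_le_sq_of_mul_sqrt_le {x m s : ℝ} (hm : 0 ≤ m) (hs : -2 ≤ s)
    (h : m * √(s + 2) ≤ x) : (s + 2) * m ^ 2 ≤ x ^ 2 := by
  calc (s + 2) * m ^ 2 = (m * √(s + 2)) ^ 2 := by
        rw [mul_pow, Real.sq_sqrt (by linarith), mul_comm]
    _ ≤ x ^ 2 := pow_le_pow_left₀ (by positivity) h 2

lemma sum_add_sq_sum_le_four_mul_sq {x m s : ℝ} (hm : 2 ≤ m) (hs : 5 ≤ s)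
    (hx : (s + 2) * m ^ 2 ≤ x ^ 2) :
    (s * m ^ 2 + x ^ 2) + (s * m + x) + 3 * m ^ 2 + 6 * x ≤ 4 * x ^ 2 := by
  have hlin : 2 * (s + 2) ≤ (s + 1) * m ^ 2 - s * m := by
    nlinarith [mul_nonneg (sub_nonneg.mpr hm) (by positivity : 0 ≤ (s + 1) * m + (s + 2))]
  nlinarith [sq_nonneg (x - 7 / 2)]

theorem almost_homogeneous_numerical_a_general (m0 m s : ℤ)
    (hm : 2 ≤ m) (hs : 8 ≤ s)
    (h : (m0 : ℝ) ≥ ((s : ℝ) * m + m0) / Real.sqrt ((s : ℝ) + 2)) :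
    (4 : ℝ) * (m0 : ℝ) ^ 2 ≥
      ((s : ℝ) * (m : ℝ) ^ 2 + (m0 : ℝ) ^ 2) + ((s : ℝ) * m + m0)
        + 3 * (m : ℝ) ^ 2 + 6 * (m0 : ℝ) := by
  have hm' : (2 : ℝ) ≤ m := by exact_mod_cast hm
  have hs' : (8 : ℝ) ≤ s := by exact_mod_cast hs
  have hlower : (m : ℝ) * √((s : ℝ) + 2) ≤ m0 :=
    mul_sqrt_le_of_div_sqrt_le (by linarith) (by linarith) h
  exact sum_add_sq_sum_le_four_mul_sq hm' (by linarith)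
    (sq_mul_le_sq_of_mul_sqrt_le (by linarith) (by linarith) hlower)

/-- Lemma 4.8 a): for integers `m0 ≥ 1`, `m ≥ 2`, `s ≥ 8`, with `Σ = s·m + m0`
and `Q = s·m² + m0²`, if `m0 ≥ Σ/√(s+2)` then `4·m0² ≥ Q + Σ + 3m² + 6m0`. -/
theorem almost_homogeneous_numerical_a (m0 m s : ℤ)
    (hm0 : 1 ≤ m0) (hm : 2 ≤ m) (hs : 8 ≤ s)
    (h : (m0 : ℝ) ≥ ((s : ℝ) * m + m0) / Real.sqrt ((s : ℝ) + 2)) :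
    (4 : ℝ) * (m0 : ℝ) ^ 2 ≥
      ((s : ℝ) * (m : ℝ) ^ 2 + (m0 : ℝ) ^ 2) + ((s : ℝ) * m + m0)
        + 3 * (m : ℝ) ^ 2 + 6 * (m0 : ℝ) :=
  almost_homogeneous_numerical_a_general m0 m s hm hs h
end

section
/- Let m0 ≥ 1, m ≥ 2 and s ≥ 8 be integers, and set Σ = s·m + m0 and Q = s·m² + m0². If m0 ≤ Σ/√(s+2), then (4/(s+2))·Σ² ≥ m0² + (s+3)·m² + 3Σ. -/
/-!
Squaring the hypothesis gives `(s + 2) m0² ≤ Σ²`. Adding `s - 2` times this inequality to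
`s + 1` times the claim cancels the `m0²` terms: what remains is `s + 2` times an expression
that is affine in `m0` with positive slope, and its value at `m0 = 1` is nonnegative because
`(s - 6) m ≥ 3` once `s ≥ 8` and `m ≥ 2`.
-/

theorem mul_sq_le_sq_of_le_div_sqrt {a b c : ℝ} (ha : 0 ≤ a) (hc : 0 < c)
    (h : a ≤ b / Real.sqrt c) : c * a ^ 2 ≤ b ^ 2 := by
  have hab : a * Real.sqrt c ≤ b := (le_div_iff₀ (Real.sqrt_pos.mpr hc)).mp h
  calc c * a ^ 2 = (a * Real.sqrt c) ^ 2 := by rw [mul_pow, Real.sq_sqrt hc.le, mul_comm]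
    _ ≤ b ^ 2 := pow_le_pow_left₀ (by positivity) hab 2

namespace AlmostHomogeneous

variable {x y z : ℝ}

theorem reduced_bound (hx : 1 ≤ x) (hy : 2 ≤ y) (hz : 8 ≤ z) :
    3 * x ^ 2 + (z + 1) * (z + 3) * y ^ 2 + 3 * (z + 1) * (z * y + x) ≤ 3 * (z * y + x) ^ 2 := by
  have slope : 0 ≤ (x - 1) * (6 * z * y - 3 * z - 3) := mul_nonneg (by linarith) (by nlinarith)
  have quadratic : 0 ≤ y * (y - 2) * (2 * z ^ 2 - 4 * z - 3) :=
    mul_nonneg (mul_nonneg (by linarith) (by linarith)) (by nlinarith)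
  have constant : 0 ≤ (z + 1) * ((z - 6) * y - 3) := mul_nonneg (by linarith) (by nlinarith)
  linear_combination slope + quadratic + constant

theorem bound_of_sq_le (hx : 1 ≤ x) (hy : 2 ≤ y) (hz : 8 ≤ z)
    (hsq : (z + 2) * x ^ 2 ≤ (z * y + x) ^ 2) :
    (x ^ 2 + (z + 3) * y ^ 2 + 3 * (z * y + x)) * (z + 2) ≤ 4 * (z * y + x) ^ 2 := by
  have weighted : 0 ≤ (z + 1) *
      (4 * (z * y + x) ^ 2 - (x ^ 2 + (z + 3) * y ^ 2 + 3 * (z * y + x)) * (z + 2)) := by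
    linear_combination mul_le_mul_of_nonneg_left hsq (by linarith : (0 : ℝ) ≤ z - 2) +
      mul_le_mul_of_nonneg_left (reduced_bound hx hy hz) (by linarith : (0 : ℝ) ≤ z + 2)
  linarith [nonneg_of_mul_nonneg_right weighted (by linarith)]

end AlmostHomogeneous

/-- Lemma 4.8 b): for integers `m0 ≥ 1`, `m ≥ 2`, `s ≥ 8`, with `Σ = s·m + m0`
and `Q = s·m² + m0²`, if `m0 ≤ Σ/√(s+2)` then `(4/(s+2))·Σ² ≥ m0² + (s+3)·m² + 3Σ`. -/
theorem almost_homogeneous_numerical_b (m0 m s : ℤ)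
    (hm0 : 1 ≤ m0) (hm : 2 ≤ m) (hs : 8 ≤ s)
    (h : (m0 : ℝ) ≤ ((s : ℝ) * m + m0) / Real.sqrt ((s : ℝ) + 2)) :
    (4 / ((s : ℝ) + 2)) * ((s : ℝ) * m + m0) ^ 2 ≥
      (m0 : ℝ) ^ 2 + ((s : ℝ) + 3) * (m : ℝ) ^ 2 + 3 * ((s : ℝ) * m + m0) := by
  have hx : (1 : ℝ) ≤ m0 := by exact_mod_cast hm0
  have hy : (2 : ℝ) ≤ m := by exact_mod_cast hm
  have hz : (8 : ℝ) ≤ s := by exact_mod_cast hs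
  have hsq := mul_sq_le_sq_of_le_div_sqrt (by linarith) (by linarith) h
  rw [ge_iff_le, div_mul_eq_mul_div, le_div_iff₀ (by linarith)]
  exact AlmostHomogeneous.bound_of_sq_le hx hy hz hsq
end

section
/- Under the constraints x ≥ y > 0, 2y ≥ x, s ≥ 9, t ≥ 4, s ≥ t (real x, y and integers s, t), with x ≥ 4, the polynomial inequality (3x²−6x)s² + (16xy−7x²−4y²+6x−12y)st + 4(x²+4y²−4xy)t² + 4(x²−y²−4xy−9x+6y)s + 3(16xy−5x²−12y²+2x−4y)t + 5x²+12y²−32xy+24y−30x ≥ 0 holds. -/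
/-!
Put `u = s - t` and `v = t - 4`. In these coordinates every coefficient of the polynomial except
the constant one is nonnegative when `4 ≤ x` and `y ≤ x ≤ 2y`, so the polynomial is monotone in
`u` and in `v` on the quadrant `u, v ≥ 0`. Hence on the region `u + v ≥ 5` it is at least its value
on the segment `u + v = 5`, i.e. `s = 9`, `4 ≤ t ≤ 9`; along that segment it increases with `t`, and
at the corner `(s, t) = (9, 4)` it equals `36x² + 336xy - 56y² - 600x - 240y ≥ 0`.
-/

def poly24 (x y s t : ℝ) : ℝ :=
  (3 * x ^ 2 - 6 * x) * s ^ 2 + (16 * x * y - 7 * x ^ 2 - 4 * y ^ 2 + 6 * x - 12 * y) * s * t +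
    4 * (x ^ 2 + 4 * y ^ 2 - 4 * x * y) * t ^ 2 +
    4 * (x ^ 2 - y ^ 2 - 4 * x * y - 9 * x + 6 * y) * s +
    3 * (16 * x * y - 5 * x ^ 2 - 12 * y ^ 2 + 2 * x - 4 * y) * t +
    5 * x ^ 2 + 12 * y ^ 2 - 32 * x * y + 24 * y - 30 * x

def poly24Shifted (x y u v : ℝ) : ℝ :=
  (-39 * x ^ 2 + 96 * x * y + 44 * y ^ 2 - 150 * x - 120 * y) +
    (-11 * x ^ 2 + 32 * x * y + 56 * y ^ 2 - 30 * x - 84 * y) * v + (12 * y ^ 2 - 12 * y) * v ^ 2 +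
    (48 * x * y - 20 * y ^ 2 - 60 * x - 24 * y) * u +
    (-x ^ 2 + 16 * x * y - 4 * y ^ 2 - 6 * x - 12 * y) * u * v + (3 * x ^ 2 - 6 * x) * u ^ 2

theorem poly24_eq_poly24Shifted (x y s t : ℝ) :
    poly24 x y s t = poly24Shifted x y (s - t) (t - 4) := by
  unfold poly24 poly24Shifted
  ring

section

variable {x y : ℝ}

theorem poly24Shifted_mono (hx : 4 ≤ x) (hyx : y ≤ x) (hxy : x ≤ 2 * y) {u v u' v' : ℝ}
    (hu : 0 ≤ u) (hv : 0 ≤ v) (huu' : u ≤ u') (hvv' : v ≤ v') :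
    poly24Shifted x y u v ≤ poly24Shifted x y u' v' := by
  have hy : 2 ≤ y := by linarith
  have hv₁ : 0 ≤ -11 * x ^ 2 + 32 * x * y + 56 * y ^ 2 - 30 * x - 84 * y := by
    nlinarith [mul_nonneg (sub_nonneg.2 hx) (sub_nonneg.2 hy), mul_nonneg (sub_nonneg.2 hyx) (sub_nonneg.2 hxy)]
  have hv₂ : 0 ≤ 12 * y ^ 2 - 12 * y := by nlinarith
  have hu₁ : 0 ≤ 48 * x * y - 20 * y ^ 2 - 60 * x - 24 * y := by
    nlinarith [mul_nonneg (sub_nonneg.2 hx) (sub_nonneg.2 hxy), mul_nonneg (sub_nonneg.2 hyx) (sub_nonneg.2 hxy)]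
  have huv : 0 ≤ -x ^ 2 + 16 * x * y - 4 * y ^ 2 - 6 * x - 12 * y := by
    nlinarith [mul_nonneg (sub_nonneg.2 hx) (sub_nonneg.2 hy), mul_nonneg (sub_nonneg.2 hyx) (sub_nonneg.2 hxy)]
  have hu₂ : 0 ≤ 3 * x ^ 2 - 6 * x := by nlinarith
  unfold poly24Shifted
  gcongr
  exact mul_nonneg huv (hu.trans huu')

theorem poly24_nine_four_le (hx : 4 ≤ x) (hxy : x ≤ 2 * y) {t : ℝ} (ht : 4 ≤ t) :
    poly24 x y 9 4 ≤ poly24 x y 9 t := by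
  have hgap : 0 ≤ 2 * y - x := by linarith
  have hfactor : 0 ≤ 6 * (x + 18 * y - 10) - 4 * (2 * y - x) * (14 - t) := by
    nlinarith [mul_nonneg hgap (sub_nonneg.2 ht)]
  have hdiff : poly24 x y 9 t - poly24 x y 9 4 =
      (t - 4) * (2 * y - x) * (6 * (x + 18 * y - 10) - 4 * (2 * y - x) * (14 - t)) := by
    unfold poly24
    ring
  nlinarith [mul_nonneg (mul_nonneg (sub_nonneg.2 ht) hgap) hfactor]

theorem poly24_nine_four_nonneg (hx : 4 ≤ x) (hyx : y ≤ x) (hxy : x ≤ 2 * y) :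
    0 ≤ poly24 x y 9 4 := by
  have hcorner : poly24 x y 9 4 = 36 * x ^ 2 + 336 * x * y - 56 * y ^ 2 - 600 * x - 240 * y := by
    unfold poly24
    ring
  rw [hcorner]
  nlinarith [mul_nonneg (sub_nonneg.2 hx) (sub_nonneg.2 hx), mul_nonneg (sub_nonneg.2 hyx) (sub_nonneg.2 hxy)]

theorem poly24_nonneg (hx : 4 ≤ x) (hyx : y ≤ x) (hxy : x ≤ 2 * y) {s t : ℝ}
    (hs : 9 ≤ s) (ht : 4 ≤ t) (hts : t ≤ s) : 0 ≤ poly24 x y s t := by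
  refine (poly24_nine_four_nonneg hx hyx hxy).trans ?_
  rw [poly24_eq_poly24Shifted x y s t]
  rcases le_total 5 (s - t) with hu | hu
  · calc poly24 x y 9 4 = poly24Shifted x y 5 0 := by rw [poly24_eq_poly24Shifted]; norm_num
      _ ≤ _ := poly24Shifted_mono hx hyx hxy (by norm_num) le_rfl hu (by linarith)
  · calc poly24 x y 9 4 ≤ poly24 x y 9 (9 - (s - t)) := poly24_nine_four_le hx hxy (by linarith)
      _ = poly24Shifted x y (s - t) (5 - (s - t)) := by rw [poly24_eq_poly24Shifted]; ring_nf
      _ ≤ _ := poly24Shifted_mono hx hyx hxy (by linarith) (by linarith) le_rfl (by linarith)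

end

theorem inequality_24_general (x y : ℝ) (s t : ℤ)
    (hxy : x ≥ y) (h2y : 2 * y ≥ x)
    (hs : 9 ≤ s) (ht : 4 ≤ t) (hst : s ≥ t) (hx : 4 ≤ x) :
    (3 * x ^ 2 - 6 * x) * (s : ℝ) ^ 2 +
      (16 * x * y - 7 * x ^ 2 - 4 * y ^ 2 + 6 * x - 12 * y) * (s : ℝ) * (t : ℝ) +
      4 * (x ^ 2 + 4 * y ^ 2 - 4 * x * y) * (t : ℝ) ^ 2 +
      4 * (x ^ 2 - y ^ 2 - 4 * x * y - 9 * x + 6 * y) * (s : ℝ) +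
      3 * (16 * x * y - 5 * x ^ 2 - 12 * y ^ 2 + 2 * x - 4 * y) * (t : ℝ) +
      5 * x ^ 2 + 12 * y ^ 2 - 32 * x * y + 24 * y - 30 * x ≥ 0 :=
  poly24_nonneg hx hxy h2y (by exact_mod_cast hs) (by exact_mod_cast ht) (by exact_mod_cast hst)

/-- Inequality (24) (eq:nowa2): under the constraints `x ≥ y > 0`, `2y ≥ x`,
`s ≥ 9`, `t ≥ 4`, `s ≥ t` and `x ≥ 4`, the quadratic polynomial in `s, t`
appearing in the proof of Lemma 5.1 is nonnegative. -/
theorem inequality_24 (x y : ℝ) (s t : ℤ)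
    (hxy : x ≥ y) (hy : 0 < y) (h2y : 2 * y ≥ x)
    (hs : 9 ≤ s) (ht : 4 ≤ t) (hst : s ≥ t) (hx : 4 ≤ x) :
    (3 * x ^ 2 - 6 * x) * (s : ℝ) ^ 2 +
      (16 * x * y - 7 * x ^ 2 - 4 * y ^ 2 + 6 * x - 12 * y) * (s : ℝ) * (t : ℝ) +
      4 * (x ^ 2 + 4 * y ^ 2 - 4 * x * y) * (t : ℝ) ^ 2 +
      4 * (x ^ 2 - y ^ 2 - 4 * x * y - 9 * x + 6 * y) * (s : ℝ) +
      3 * (16 * x * y - 5 * x ^ 2 - 12 * y ^ 2 + 2 * x - 4 * y) * (t : ℝ) +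
      5 * x ^ 2 + 12 * y ^ 2 - 32 * x * y + 24 * y - 30 * x ≥ 0 :=
  inequality_24_general x y s t hxy h2y hs ht hst hx
end

section
/- Suppose the Reduction Algorithm is successfully applied to a sequence (b1,...,br) altering positions ℓ−1 and ℓ, producing entries a_{ℓ−1} and a_ℓ on those positions. Then either a_ℓ = 0 or b_{ℓ−1} − b_ℓ < a_{ℓ−1} − a_ℓ. -/
/-- One pass of the Reduction Algorithm with parameter `m`, acting on the last
`m` entries of the sequence, listed in reverse order (i.e. from `a_m` down to
`a_1`), with `Z` the set of still available reducers.  At each step the reducer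
is `a` itself if `a < m` and `a ≤ max Z`, and otherwise `max Z`; the algorithm
fails (`none`) if the chosen reducer is no longer available. -/
def redAux (m : ℕ) : List ℕ → Finset ℕ → Option (List ℕ)
  | [], _ => some []
  | a :: rest, Z =>
    let z := Z.max.getD 0
    let r := if a < m ∧ a ≤ z then a else z
    if r ∈ Z then
      (redAux m rest (Z.erase r)).map (fun cs => (a - r) :: cs)
    else
      none

/-- The Reduction Algorithm with parameter `m` applied to a sequence
`S = (b_1, …, b_k, a_1, …, a_m)`.  Returns `some` of the `m`-reduction
`(b_1, …, b_k, c_1, …, c_m)` if `S` is `m`-reducible, and `none` otherwise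
(in particular if `S` is shorter than `m`). -/
def mReduction (m : ℕ) (S : List ℕ) : Option (List ℕ) :=
  if m ≤ S.length then
    (redAux m (S.drop (S.length - m)).reverse (Finset.Icc 1 m)).map
      (fun cs => S.take (S.length - m) ++ cs.reverse)
  else
    none

lemma redAux_cons {m a : ℕ} {rest : List ℕ} {Z : Finset ℕ} {cs : List ℕ}
    (h : redAux m (a :: rest) Z = some cs) :
    ∃ r cs', r = (if a < m ∧ a ≤ Z.max.getD 0 then a else Z.max.getD 0) ∧ r ∈ Z ∧
      redAux m rest (Z.erase r) = some cs' ∧ cs = (a - r) :: cs' := by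
  simp only [redAux] at h
  split at h
  · split at h
    · rw [Option.map_eq_some_iff] at h
      obtain ⟨cs', h1, h2⟩ := h
      exact ⟨a, cs', by simp [*], by assumption, h1, h2.symm⟩
    · exact absurd h (by simp)
  · split at h
    · rw [Option.map_eq_some_iff] at h
      obtain ⟨cs', h1, h2⟩ := h
      exact ⟨Z.max.getD 0, cs', by simp [*], by assumption, h1, h2.symm⟩
    · exact absurd h (by simp)

lemma redAux_length (m : ℕ) : ∀ (l : List ℕ) (Z : Finset ℕ) (cs : List ℕ),
    redAux m l Z = some cs → cs.length = l.length
  | [], Z, cs, h => by simp [redAux] at h; simp [← h]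
  | a :: rest, Z, cs, h => by
    obtain ⟨r, cs', -, -, h1, h2⟩ := redAux_cons h
    subst h2
    simp [redAux_length m rest _ cs' h1]

lemma erase_max_lt {Z : Finset ℕ} {z x : ℕ} (hz : z ∈ Z) (hmax : Z.max.getD 0 = z)
    (hx : x ∈ Z.erase z) : x < z := by
  have hne : Z.Nonempty := ⟨z, hz⟩
  have h1 : Z.max = some (Z.max' hne) := (Finset.coe_max' hne).symm
  rw [h1] at hmax
  simp at hmax
  have := Finset.le_max' Z x (Finset.mem_of_mem_erase hx)
  have hxne := Finset.ne_of_mem_erase hx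
  omega

lemma redAux_adj (m : ℕ) : ∀ (rev : List ℕ) (Z : Finset ℕ) (cs : List ℕ) (j : ℕ),
    redAux m rev Z = some cs → j + 1 < rev.length →
    cs.getD j 0 < rev.getD j 0 → cs.getD (j + 1) 0 < rev.getD (j + 1) 0 →
    cs.getD j 0 = 0 ∨
      (rev.getD (j + 1) 0 : ℤ) - (rev.getD j 0 : ℤ) <
        (cs.getD (j + 1) 0 : ℤ) - (cs.getD j 0 : ℤ)
  | [], Z, cs, j, h, hj, _, _ => by simp at hj
  | [a], Z, cs, j, h, hj, _, _ => by simp at hj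
  | a :: a' :: rest, Z, cs, j, h, hj, halt1, halt2 => by
    obtain ⟨r, cs1, hrdef, hrZ, h1, hcs⟩ := redAux_cons h
    subst hcs
    match j with
    | Nat.succ k =>
      simp only [List.getD_cons_succ]
      exact redAux_adj m (a' :: rest) (Z.erase r) cs1 k h1 (by simpa using hj)
        (by simpa using halt1) (by simpa using halt2)
    | 0 =>
      simp only [List.getD_cons_zero, List.getD_cons_succ] at *
      by_cases hc0 : a - r = 0
      · exact Or.inl hc0
      right
      -- the branch r = a would give a - r = 0, so r = max
      have hr : r = Z.max.getD 0 := by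
        rcases hrdef with hrdef
        split at hrdef
        · omega
        · exact hrdef
      subst hr
      obtain ⟨r', cs2, hrdef', hrZ', h2, hcs1⟩ := redAux_cons h1
      subst hcs1
      simp only [List.getD_cons_zero] at *
      have hr'lt : r' < Z.max.getD 0 := erase_max_lt hrZ rfl hrZ'
      omega

lemma getD_reverse {l : List ℕ} {p : ℕ} (hp : p < l.length) :
    l.reverse.getD p 0 = l.getD (l.length - 1 - p) 0 := by
  rw [List.getD_eq_getElem?_getD, List.getD_eq_getElem?_getD,
    List.getElem?_reverse hp]

/-- Lemma 2.7 (lem:reddown): suppose the Reduction Algorithm (with some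
parameter `m`) is successfully applied to a sequence `S` of positive integers,
producing `T`, and that the two consecutive positions `i` and `i+1`
(0-indexed) were both altered by the reduction.  Then either the new entry at
position `i+1` is `0`, or `S[i] − S[i+1] < T[i] − T[i+1]`. -/
theorem reddown (m i : ℕ) (S T : List ℕ)
    (hpos : ∀ x ∈ S, 0 < x) (h : mReduction m S = some T)
    (hi : i + 1 < S.length)
    (halt1 : T.getD i 0 < S.getD i 0)
    (halt2 : T.getD (i + 1) 0 < S.getD (i + 1) 0) :
    T.getD (i + 1) 0 = 0 ∨
      (S.getD i 0 : ℤ) - (S.getD (i + 1) 0 : ℤ) <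
        (T.getD i 0 : ℤ) - (T.getD (i + 1) 0 : ℤ) := by
  unfold mReduction at h
  split at h
  case isFalse => simp at h
  case isTrue hm =>
  rw [Option.map_eq_some_iff] at h
  obtain ⟨cs, hred, hT⟩ := h
  set L := S.length with hL
  set D := L - m with hD
  set rev := (S.drop D).reverse with hrev
  have hdl : (S.drop D).length = m := by simp [hD]; omega
  have hrl : rev.length = m := by simp [hrev, hdl]
  have hcsl : cs.length = m := by rw [redAux_length m _ _ _ hred, hrl]
  have hiD : D ≤ i := by
    by_contra hlt
    push_neg at hlt
    have : T.getD i 0 = S.getD i 0 := by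
      subst hT
      rw [List.getD_append _ _ _ _ (by simp [List.length_take]; omega)]
      rw [List.getD_eq_getElem?_getD, List.getD_eq_getElem?_getD, List.getElem?_take]
      simp [hlt]
    omega
  set q := i - D with hq
  have hiq : i = D + q := by omega
  have hqm : q + 1 < m := by omega
  set j := m - 2 - q with hj
  have hj1 : j = m - 1 - (q + 1) := by omega
  have hj2 : j + 1 = m - 1 - q := by omega
  have htl : (S.take D).length = D := by rw [List.length_take]; omega
  have e3 : T.getD (i + 1) 0 = cs.getD j 0 := by
    subst hT
    rw [List.getD_append_right _ _ _ _ (by omega)]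
    rw [getD_reverse (by omega), hcsl, htl]
    congr 1; omega
  have e4 : T.getD i 0 = cs.getD (j + 1) 0 := by
    subst hT
    rw [List.getD_append_right _ _ _ _ (by omega)]
    rw [getD_reverse (by rw [hcsl]; omega), hcsl, htl]
    congr 1; omega
  have edrop : ∀ p, S.getD (D + p) 0 = (S.drop D).getD p 0 := by
    intro p
    rw [List.getD_eq_getElem?_getD, List.getD_eq_getElem?_getD, List.getElem?_drop]
  have e1 : S.getD (i + 1) 0 = rev.getD j 0 := by
    rw [hrev, getD_reverse (by omega), hdl]
    have : D + (q + 1) = i + 1 := by omega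
    rw [← this, edrop]
    congr 1; omega
  have e2 : S.getD i 0 = rev.getD (j + 1) 0 := by
    rw [hrev, getD_reverse (by omega), hdl]
    rw [hiq, edrop]
    congr 1; omega
  rw [e1, e2, e3, e4]
  exact redAux_adj m rev (Finset.Icc 1 m) cs j hred (by omega)
    (by rw [← e1, ← e3]; exact halt2) (by rw [← e2, ← e4]; exact halt1)
end

section
/- Let (a1,...,ar) be a sequence of nonnegative integers obtained by a finite sequence of successful reductions applied to (1,2,...,r). Then for every k, either a_k = k or a_k ≥ a_{k+1} ≥ ... ≥ a_r. In particular, if a_k = 0 then a_{k+1} = 0. -/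
/-- Remove the trailing zeros of a sequence (done before applying the next
reduction). -/
def removeTrailingZeros (L : List ℕ) : List ℕ :=
  (L.reverse.dropWhile (· = 0)).reverse

/-- Pad a sequence with zeros on the right to length `r`. -/
def padTo (r : ℕ) (L : List ℕ) : List ℕ :=
  L ++ List.replicate (r - L.length) 0

/-- `RedStar r S T` : the length-`r` sequence `T` (possibly with zero entries)
is obtained from `S` by a finite number of successful reductions, where before
each reduction the trailing zeros are removed, and after it the sequence is
padded with zeros back to length `r`. -/
inductive RedStar (r : ℕ) : List ℕ → List ℕ → Prop
  | refl (S : List ℕ) : RedStar r S S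
  | step (S T U : List ℕ) (m : ℕ) : RedStar r S T →
      mReduction m (removeTrailingZeros T) = some U → RedStar r S (padTo r U)

/-!
Every sequence reachable from `(1, …, r)` has the shape `(1, 2, …, k) ++ B` with `B` weakly
decreasing and bounded by `k`. In such a sequence consecutive entries grow by at most one, and on
an input of this kind an `m`-reduction outputs a weakly decreasing block: an entry that is not its
own reducer is reduced by the current maximum reducer, and the next maximum is strictly smaller.
The first output entry is `a - max Z`, so every output entry is at most the entry at the cut
minus one; hence the shape survives, with `k` replaced by the cut position if that is smaller.
Removing trailing zeros and padding with zeros also preserve it.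
-/

theorem Finset.le_max_getD {Z : Finset ℕ} {w : ℕ} (hw : w ∈ Z) : w ≤ Z.max.getD 0 := by
  obtain ⟨z, hz⟩ := Finset.max_of_mem hw
  have := Finset.le_max hw
  rw [hz] at this ⊢
  exact WithBot.coe_le_coe.mp this

theorem Finset.max_getD_erase_lt {Z : Finset ℕ} (hZ : 0 < Z.max.getD 0) :
    (Z.erase (Z.max.getD 0)).max.getD 0 < Z.max.getD 0 := by
  rcases hw : (Z.erase (Z.max.getD 0)).max with _ | w
  · exact hZ
  · have hmem := Finset.mem_of_max hw
    exact lt_of_le_of_ne (Finset.le_max_getD (Finset.mem_of_mem_erase hmem))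
      (Finset.ne_of_mem_erase hmem)

theorem redAux_cons_eq_some {m a : ℕ} {rest : List ℕ} {Z : Finset ℕ} {C : List ℕ}
    (h : redAux m (a :: rest) Z = some C) :
    ∃ ρ ∈ Z, (a ≤ ρ ∨ ρ = Z.max.getD 0) ∧
      ∃ cs, redAux m rest (Z.erase ρ) = some cs ∧ C = (a - ρ) :: cs := by
  simp only [redAux] at h
  split_ifs at h with hself hρ hρ <;> simp only [Option.map_eq_some_iff] at h
  · obtain ⟨cs, hcs, rfl⟩ := h
    exact ⟨a, hρ, .inl le_rfl, cs, hcs, rfl⟩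
  · obtain ⟨cs, hcs, rfl⟩ := h
    exact ⟨_, hρ, .inr rfl, cs, hcs, rfl⟩

theorem redAux_cons_eq_some_sub_max {m a : ℕ} {rest : List ℕ} {Z : Finset ℕ} {C : List ℕ}
    (h : redAux m (a :: rest) Z = some C) : ∃ cs, C = (a - Z.max.getD 0) :: cs := by
  obtain ⟨ρ, hρ, hρa, cs, -, rfl⟩ := redAux_cons_eq_some h
  have hρ_le := Finset.le_max_getD hρ
  have : a - ρ = a - Z.max.getD 0 := by rcases hρa with h | rfl <;> omega
  exact ⟨cs, by rw [this]⟩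

theorem redAux_isChain_and_forall_le {m : ℕ} {L C : List ℕ} {Z : Finset ℕ}
    (h : redAux m L Z = some C) (hZ : Z ⊆ Finset.Icc 1 m)
    (hL : L.IsChain (fun a b => a ≤ b + 1)) :
    C.IsChain (· ≤ ·) ∧ ∀ c ∈ C, c ≤ L.getLastD 0 - 1 := by
  induction L generalizing Z C with
  | nil =>
    simp only [redAux, Option.some.injEq] at h
    simp [← h]
  | cons a rest ih =>
    obtain ⟨ρ, hρ, hρa, cs, hcs, rfl⟩ := redAux_cons_eq_some h
    have hρ_pos : 1 ≤ ρ := (Finset.mem_Icc.mp (hZ hρ)).1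
    obtain ⟨hcs_chain, hcs_le⟩ :=
      ih hcs ((Finset.erase_subset ρ Z).trans hZ) hL.tail
    cases rest with
    | nil =>
      obtain rfl : cs = [] := by simpa [redAux] using hcs.symm
      simp only [List.isChain_singleton, List.getLastD_cons, List.getLastD_nil, List.mem_singleton,
        forall_eq, true_and]
      omega
    | cons b rest =>
      obtain ⟨cs', rfl⟩ := redAux_cons_eq_some_sub_max hcs
      have hab : a ≤ b + 1 := (List.isChain_cons_cons.mp hL).1
      -- Either `a` was its own reducer, or `ρ = max Z` and the next reducer is smaller.
      have hhead : a - ρ ≤ b - (Z.erase ρ).max.getD 0 := by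
        rcases hρa with hρa | rfl
        · omega
        · have := Finset.max_getD_erase_lt (Z := Z) (by omega)
          omega
      refine ⟨List.isChain_cons_cons.mpr ⟨hhead, hcs_chain⟩, ?_⟩
      simp only [List.getLastD_cons] at hcs_le ⊢
      intro c hc
      rcases List.mem_cons.mp hc with rfl | hc
      · exact hhead.trans (hcs_le _ List.mem_cons_self)
      · exact hcs_le c hc

theorem removeTrailingZeros_prefix (L : List ℕ) : removeTrailingZeros L <+: L := by
  rw [removeTrailingZeros, ← L.reverse_reverse, List.reverse_prefix, L.reverse_reverse]
  exact List.dropWhile_suffix _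

theorem mReduction_eq_some {m : ℕ} {S U : List ℕ} (h : mReduction m S = some U) :
    ∃ cs, redAux m (S.drop (S.length - m)).reverse (Finset.Icc 1 m) = some cs ∧
      U = S.take (S.length - m) ++ cs.reverse := by
  unfold mReduction at h
  split_ifs at h
  obtain ⟨cs, hcs, rfl⟩ := Option.map_eq_some_iff.mp h
  exact ⟨cs, hcs, rfl⟩

theorem List.Pairwise.getD_antitone {l : List ℕ} (h : l.Pairwise (· ≥ ·)) {i j : ℕ}
    (hij : i ≤ j) : l.getD j 0 ≤ l.getD i 0 := by
  rcases lt_or_ge j l.length with hj | hj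
  · rw [List.getD_eq_getElem _ _ hj, List.getD_eq_getElem _ _ (by omega)]
    rcases hij.lt_or_eq with hij | rfl
    · exact List.pairwise_iff_getElem.mp h i j _ _ hij
    · exact le_rfl
  · rw [List.getD_eq_default _ _ hj]
    exact Nat.zero_le _

theorem List.Pairwise.getD_le_of_mem_take {l : List ℕ} (h : l.Pairwise (· ≥ ·)) {j x : ℕ}
    (hx : x ∈ l.take j) : l.getD j 0 ≤ x := by
  obtain ⟨i, hi, rfl⟩ := List.mem_take_iff_getElem.mp hx
  rw [← List.getD_eq_getElem _ 0]
  exact h.getD_antitone (by omega)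

theorem getD_range'_append_of_lt {k i : ℕ} (B : List ℕ) (h : i < k) :
    (List.range' 1 k ++ B).getD i 0 = i + 1 := by
  rw [List.getD_append _ _ _ _ (by simpa using h), List.getD_eq_getElem _ _ (by simpa using h),
    List.getElem_range']
  omega

theorem getD_range'_append_of_le {k i : ℕ} (B : List ℕ) (h : k ≤ i + 1) :
    (List.range' 1 k ++ B).getD i 0 = (k :: B).getD (i + 1 - k) 0 := by
  rcases h.lt_or_eq with h | h
  · rw [List.getD_append_right _ _ _ _ (by simp; omega), List.length_range',
      show i + 1 - k = (i - k) + 1 by omega, List.getD_cons_succ]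
  · rw [getD_range'_append_of_lt _ (by omega), h, Nat.sub_self, List.getD_cons_zero]

/-- `(k :: B).Pairwise (· ≥ ·)` says that `B` is weakly decreasing with entries at most `k`. -/
def RangeThenAntitone (A : List ℕ) : Prop :=
  ∃ k B, A = List.range' 1 k ++ B ∧ (k :: B).Pairwise (· ≥ ·)

namespace RangeThenAntitone

theorem range' (r : ℕ) : RangeThenAntitone (List.range' 1 r) :=
  ⟨r, [], by simp, by simp⟩

theorem exists_getD_eq_succ_and_antitone {A : List ℕ} (hA : RangeThenAntitone A) :
    ∃ k, (∀ i < k, A.getD i 0 = i + 1) ∧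
      ∀ i j, k ≤ i → i ≤ j → A.getD j 0 ≤ A.getD i 0 := by
  obtain ⟨k, B, rfl, hkB⟩ := hA
  refine ⟨k, fun i hi => getD_range'_append_of_lt B hi, fun i j hki hij => ?_⟩
  rw [getD_range'_append_of_le B (by omega), getD_range'_append_of_le B (by omega)]
  exact hkB.getD_antitone (by omega)

theorem getD_succ_le {A : List ℕ} (hA : RangeThenAntitone A) (i : ℕ) :
    A.getD (i + 1) 0 ≤ A.getD i 0 + 1 := by
  obtain ⟨k, B, rfl, hkB⟩ := hA
  rcases lt_or_ge (i + 1) k with hi | hi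
  · rw [getD_range'_append_of_lt B hi, getD_range'_append_of_lt B (by omega)]
  · rw [getD_range'_append_of_le B (by omega), getD_range'_append_of_le B (by omega)]
    exact (hkB.getD_antitone (by omega)).trans (Nat.le_succ _)

theorem isChain {A : List ℕ} (hA : RangeThenAntitone A) :
    A.IsChain (fun a b => b ≤ a + 1) := by
  refine List.isChain_iff_getElem.mpr fun i hi => ?_
  rw [← List.getD_eq_getElem _ 0, ← List.getD_eq_getElem _ 0]
  exact hA.getD_succ_le i

theorem take_append {S D : List ℕ} (hS : RangeThenAntitone S) (p : ℕ)
    (hD : D.Pairwise (· ≥ ·)) (hDS : ∀ d ∈ D, d ≤ S.getD p 0 - 1) :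
    RangeThenAntitone (S.take p ++ D) := by
  obtain ⟨k, B, rfl, hkB⟩ := hS
  rcases le_or_gt p k with hpk | hkp
  · have hSp : (List.range' 1 k ++ B).getD p 0 ≤ p + 1 := by
      rcases hpk.lt_or_eq with hpk | rfl
      · rw [getD_range'_append_of_lt B hpk]
      · rw [getD_range'_append_of_le B (by omega)]
        exact (hkB.getD_antitone (Nat.zero_le _)).trans (Nat.le_succ _)
    refine ⟨p, D, ?_, List.pairwise_cons.mpr ⟨fun d hd => by have := hDS d hd; omega, hD⟩⟩
    rw [List.take_append, List.take_range'_of_length_ge (by simpa using hpk)]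
    simp [show p - k = 0 by omega]
  · refine ⟨k, B.take (p - k) ++ D, ?_, ?_⟩
    · rw [List.take_append, List.take_of_length_le (by simpa using hkp.le), List.length_range',
        List.append_assoc]
    · rw [← List.cons_append, ← List.take_succ_cons, List.pairwise_append]
      refine ⟨hkB.sublist (List.take_sublist _ _), hD, fun x hx d hd => ?_⟩
      have hpx := hkB.getD_le_of_mem_take hx
      have hdp := hDS d hd
      rw [getD_range'_append_of_le B (by omega), show p + 1 - k = p - k + 1 by omega] at hdp
      omega

theorem of_prefix {S T : List ℕ} (hT : RangeThenAntitone T) (h : S <+: T) :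
    RangeThenAntitone S := by
  rw [List.prefix_iff_eq_take.mp h]
  simpa using hT.take_append S.length List.Pairwise.nil (by simp)

theorem padTo {S : List ℕ} (hS : RangeThenAntitone S) (r : ℕ) :
    RangeThenAntitone (padTo r S) := by
  simpa [_root_.padTo] using hS.take_append S.length (D := List.replicate (r - S.length) 0)
    (List.pairwise_replicate.mpr (.inr le_rfl)) (by simp +contextual)

theorem of_mReduction {m : ℕ} {S U : List ℕ} (hS : RangeThenAntitone S)
    (h : mReduction m S = some U) : RangeThenAntitone U := by
  obtain ⟨cs, hcs, rfl⟩ := mReduction_eq_some h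
  have hchain : (S.drop (S.length - m)).reverse.IsChain (fun a b => a ≤ b + 1) :=
    List.isChain_reverse.mpr (hS.isChain.drop _)
  obtain ⟨hcs_chain, hcs_le⟩ := redAux_isChain_and_forall_le hcs subset_rfl hchain
  refine hS.take_append _ (List.pairwise_reverse.mpr hcs_chain.pairwise) fun d hd => ?_
  simpa [List.getLastD_eq_getLast?, List.getD_eq_getElem?_getD] using
    hcs_le d (List.mem_reverse.mp hd)

theorem of_redStar {r : ℕ} {A : List ℕ} (h : RedStar r (List.range' 1 r) A) :
    RangeThenAntitone A := by
  induction h with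
  | refl => exact range' r
  | step T _ _ _ hred ih =>
    exact ((ih.of_prefix (removeTrailingZeros_prefix T)).of_mReduction hred).padTo r

end RangeThenAntitone

theorem reddown_star_general (r : ℕ) (A : List ℕ)
    (h : RedStar r (List.range' 1 r) A) (k : ℕ) :
    (A.getD k 0 = k + 1 ∨
      ∀ i j : ℕ, k ≤ i → i ≤ j → j < r → A.getD j 0 ≤ A.getD i 0) ∧
    (A.getD k 0 = 0 → A.getD (k + 1) 0 = 0) := by
  obtain ⟨k₀, hrange, hanti⟩ :=
    (RangeThenAntitone.of_redStar h).exists_getD_eq_succ_and_antitone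
  rcases lt_or_ge k k₀ with hk | hk
  · rw [hrange k hk]
    exact ⟨.inl rfl, fun h => absurd h k.succ_ne_zero⟩
  · have hstep := hanti k (k + 1) hk k.le_succ
    exact ⟨.inr fun i j hi hij _ => hanti i j (hk.trans hi) hij, by omega⟩

/-- Corollary 2.8 (cor:reddown): let `A` be obtained from `(1, 2, …, r)` by a
finite sequence of successful reductions.  Then for every position `k`
(0-indexed, so the original entry is `k+1`), either `A[k] = k + 1` or
`A[k] ≥ A[k+1] ≥ … ≥ A[r-1]`; in particular if `A[k] = 0` then `A[k+1] = 0`. -/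
theorem reddown_star (r : ℕ) (A : List ℕ)
    (h : RedStar r (List.range' 1 r) A) (k : ℕ) (hk : k < r) :
    (A.getD k 0 = k + 1 ∨
      ∀ i j : ℕ, k ≤ i → i ≤ j → j < r → A.getD j 0 ≤ A.getD i 0) ∧
    (A.getD k 0 = 0 → A.getD (k + 1) 0 = 0) :=
  reddown_star_general r A h k
end

section
/- Let d, m1, m2 be positive integers with m1 ≥ m2 and d ≥ m1 + m2. Then the sequence (1,2,...,d+1) is m1-reducible, its m1-reduction is (1,2,...,d+1−m1, d+1−m1, ..., d+1−m1) with d+1−m1 repeated m1+1 times; this resulting sequence is m2-reducible, with m2-reduction (1,2,...,d+1−m1,...,d+3−m1−m2, d+2−m1−m2, d+1−m1−m2) where d+1−m1 appears at least once. -/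
lemma redAux_cons_Icc (m a j : ℕ) (L : List ℕ) (ha : j + 1 ≤ a) :
    redAux m (a :: L) (Finset.Icc 1 (j + 1)) =
      (redAux m L (Finset.Icc 1 j)).map ((a - (j + 1)) :: ·) := by
  have hmax : (Finset.Icc 1 (j + 1)).max = ↑(j + 1) :=
    le_antisymm (Finset.max_le fun x hx => WithBot.coe_le_coe.mpr (Finset.mem_Icc.mp hx).2)
      (Finset.le_max (by simp))
  have herase : (Finset.Icc 1 (j + 1)).erase (j + 1) = Finset.Icc 1 j := by
    rw [Finset.Icc_erase_right, Finset.Ico_add_one_right_eq_Icc]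
  have hgetD : (Finset.Icc 1 (j + 1)).max.getD 0 = j + 1 := by rw [hmax]; rfl
  have hreducer : (if a < m ∧ a ≤ j + 1 then a else j + 1) = j + 1 := by split <;> omega
  rw [redAux]
  simp only [hgetD, hreducer]
  rw [if_pos (by simp), herase]

lemma redAux_range'_reverse (m s : ℕ) : ∀ n : ℕ,
    redAux m (List.range' (s + 1) n).reverse (Finset.Icc 1 n) = some (List.replicate n s)
  | 0 => rfl
  | n + 1 => by
    rw [List.range'_1_concat, List.reverse_append, List.reverse_singleton, List.singleton_append,
      redAux_cons_Icc m _ n _ (by omega), redAux_range'_reverse m s n, List.replicate_succ,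
      Option.map_some, show s + 1 + n - (n + 1) = s by omega]

lemma redAux_replicate (m a : ℕ) : ∀ n : ℕ, n ≤ a →
    redAux m (List.replicate n a) (Finset.Icc 1 n) = some (List.range' (a - n) n)
  | 0, _ => rfl
  | n + 1, h => by
    rw [List.replicate_succ, redAux_cons_Icc m a n _ h, redAux_replicate m a n (by omega),
      List.range'_succ, Option.map_some, show a - (n + 1) + 1 = a - n by omega]

lemma mReduction_append (m : ℕ) (B A : List ℕ) (hA : A.length = m) :
    mReduction m (B ++ A) = (redAux m A.reverse (Finset.Icc 1 m)).map (B ++ ·.reverse) := by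
  subst hA
  simp [mReduction]

lemma mReduction_range' (n m : ℕ) :
    mReduction m (List.range' 1 (n + 1 + m)) =
      some (List.range' 1 n ++ List.replicate (m + 1) (n + 1)) := by
  rw [← List.range'_append_1, mReduction_append m _ _ List.length_range', add_comm 1 (n + 1),
    redAux_range'_reverse, Option.map_some, List.reverse_replicate, List.range'_1_concat,
    List.replicate_succ, List.append_assoc, add_comm 1 n]
  rfl

lemma mReduction_append_replicate (B : List ℕ) (k m a : ℕ) (h : m ≤ a) :
    mReduction m (B ++ List.replicate (k + m) a) =
      some (B ++ List.replicate k a ++ (List.range' (a - m) m).reverse) := by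
  rw [List.replicate_add, ← List.append_assoc, mReduction_append m _ _ List.length_replicate,
    List.reverse_replicate, redAux_replicate m a m h, Option.map_some]

theorem first_reductions_general (d m1 m2 : ℕ)
    (hm12 : m2 ≤ m1) (hd : m1 + m2 ≤ d) :
    mReduction m1 (List.range' 1 (d + 1)) =
      some (List.range' 1 (d - m1) ++ List.replicate (m1 + 1) (d + 1 - m1)) ∧
    mReduction m2
        (List.range' 1 (d - m1) ++ List.replicate (m1 + 1) (d + 1 - m1)) =
      some (List.range' 1 (d - m1) ++
        List.replicate (m1 + 1 - m2) (d + 1 - m1) ++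
        (List.range' (d + 1 - m1 - m2) m2).reverse) ∧
    1 ≤ m1 + 1 - m2 := by
  refine ⟨?_, ?_, by omega⟩
  · have h := mReduction_range' (d - m1) m1
    rwa [show d - m1 + 1 + m1 = d + 1 by omega, show d - m1 + 1 = d + 1 - m1 by omega] at h
  · have h := mReduction_append_replicate (List.range' 1 (d - m1)) (m1 + 1 - m2) m2 (d + 1 - m1)
      (by omega)
    rwa [show m1 + 1 - m2 + m2 = m1 + 1 by omega] at h

/-- First step of the proof of Theorem 3.3 (marcin-kryterium): for positive
integers `m1 ≥ m2` with `d ≥ m1 + m2`, the sequence `(1, 2, …, d+1)` is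
`m1`-reducible with `m1`-reduction `(1, …, d−m1)` followed by `m1+1` copies of
`d+1−m1`; and the latter sequence is `m2`-reducible, with `m2`-reduction
`(1, …, d−m1, d+1−m1, …, d+1−m1, d−m1, d−1−m1, …, d+1−m1−m2)` in which the
entry `d+1−m1` still appears (at least) `m1+1−m2 ≥ 1` times. -/
theorem first_reductions (d m1 m2 : ℕ)
    (hm2 : 0 < m2) (hm12 : m2 ≤ m1) (hd : m1 + m2 ≤ d) :
    mReduction m1 (List.range' 1 (d + 1)) =
      some (List.range' 1 (d - m1) ++ List.replicate (m1 + 1) (d + 1 - m1)) ∧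
    mReduction m2
        (List.range' 1 (d - m1) ++ List.replicate (m1 + 1) (d + 1 - m1)) =
      some (List.range' 1 (d - m1) ++
        List.replicate (m1 + 1 - m2) (d + 1 - m1) ++
        (List.range' (d + 1 - m1 - m2) m2).reverse) ∧
    1 ≤ m1 + 1 - m2 :=
  first_reductions_general d m1 m2 hm12 hd
end
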